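/- A position M = (n_0, n_1, n_2, n_3, n_4, n_5) in extended circular nim ECN(6_{1,3}, 2) is a P-position if and only if n_0 ⊕ n_2 ⊕ n_4 = 0 and n_1 ⊕ n_3 ⊕ n_5 = 0, where ⊕ is bitwise XOR. -/

import Mathlib

/-- `IsN move x`: `x` is an N-position (next player wins) for the game with
move relation `move` (least fixed point; correct for short games). -/
inductive IsN {α : Type*} (move : α → α → Prop) : α → Prop
  | intro (x y : α) (hxy : move x y) (hy : ∀ z, move y z → IsN move z) : IsN move x

/-- `IsP move x`: `x` is a P-position (previous player wins) under normal play. -/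
def IsP {α : Type*} (move : α → α → Prop) (x : α) : Prop :=
  ∀ y, move x y → IsN move y

/-- Move relation of extended circular nim `ECN(m_S, k)`: reduce some piles,
all lying among `k` piles taken every `s`-th pile (for some `s ∈ S`) starting
at some index `i`, removing at least one token in total. -/
def ecnMove (m : ℕ) (S : Set ℕ) (k : ℕ) (x y : Fin m → ℕ) : Prop :=
  y ≠ x ∧ (∀ j, y j ≤ x j) ∧
    ∃ s ∈ S, ∃ i : ℕ, ∀ j : Fin m, y j ≠ x j → ∃ t < k, (j : ℕ) = (i + t * s) % m

/-- `cyc m Q n` : some cyclic rotation of `n`, or of its reversal, satisfies `Q`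
(the relation `M ∈_↻ P`). -/
def cyc (m : ℕ) (Q : (Fin m → ℕ) → Prop) (n : Fin m → ℕ) : Prop :=
  ∃ r : ℕ,
    Q (fun j => n ⟨(j.1 + r) % m, Nat.mod_lt _ (Nat.lt_of_le_of_lt (Nat.zero_le _) j.isLt)⟩) ∨
    Q (fun j => n ⟨(r + (m - j.1)) % m, Nat.mod_lt _ (Nat.lt_of_le_of_lt (Nat.zero_le _) j.isLt)⟩)

/-!
A move reduces at most one pile of each parity class `{0, 2, 4}`, `{1, 3, 5}`; conversely every
such reduction is a move, because an even and an odd pile lie at odd cyclic distance 1, 3 or 5,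
hence in a common window `{i, i + s}` with `s ∈ {1, 3}`. So the game is the selective sum of two
three-pile Nim games, and Bouton's argument runs in both components at once: no single-pile
reduction keeps a zero nim-sum zero, and a nonzero nim-sum is made zero by reducing one pile.
-/

theorem IsN.not_isP {α : Type*} {move : α → α → Prop} {x : α} (h : IsN move x) :
    ¬ IsP move x := by
  induction h with
  | intro x y hxy _ ih =>
    intro hP
    obtain ⟨_, z, hyz, hz⟩ := hP y hxy
    exact ih z hyz hz

theorem isP_iff_of_wellFounded {α : Type*} {move : α → α → Prop}
    (hwf : WellFounded (flip move)) {Q : α → Prop}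
    (hstable : ∀ x y, Q x → move x y → ¬ Q y)
    (habsorb : ∀ x, ¬ Q x → ∃ y, move x y ∧ Q y) (x : α) :
    IsP move x ↔ Q x := by
  have key : ∀ x, (Q x → IsP move x) ∧ (¬ Q x → IsN move x) := by
    intro x
    induction x using hwf.induction with
    | _ x ih =>
      refine ⟨fun hx y hxy => (ih y hxy).2 (hstable x y hx hxy), fun hx => ?_⟩
      obtain ⟨y, hxy, hy⟩ := habsorb x hx
      exact IsN.intro x y hxy ((ih y hxy).1 hy)
  exact ⟨fun hP => by_contra fun hx => ((key x).2 hx).not_isP hP, (key x).1⟩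

theorem ecnMove.lt {m : ℕ} {S : Set ℕ} {k : ℕ} {x y : Fin m → ℕ} (h : ecnMove m S k x y) :
    y < x :=
  lt_of_le_of_ne h.2.1 h.1

theorem wellFounded_flip_ecnMove (m : ℕ) (S : Set ℕ) (k : ℕ) :
    WellFounded (flip (ecnMove m S k)) :=
  Subrelation.wf (fun h => h.lt) wellFounded_lt

namespace CircularNim

open Function

def ReducesAtMostOne {ι : Type*} (u v : ι → ℕ) : Prop :=
  v ≤ u ∧ ∀ k k', v k ≠ u k → v k' ≠ u k' → k = k'

theorem reducesAtMostOne_refl {ι : Type*} (u : ι → ℕ) : ReducesAtMostOne u u :=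
  ⟨le_rfl, fun _ _ h => absurd rfl h⟩

theorem reducesAtMostOne_update {ι : Type*} [DecidableEq ι] (u : ι → ℕ) {k : ι} {a : ℕ}
    (ha : a ≤ u k) : ReducesAtMostOne u (update u k a) := by
  have hchanged : ∀ j, update u k a j ≠ u j → j = k := fun j hj => by
    by_contra hjk
    exact hj (update_of_ne hjk a u)
  refine ⟨fun j => ?_, fun j j' hj hj' => (hchanged j hj).trans (hchanged j' hj').symm⟩
  rcases eq_or_ne j k with rfl | hjk
  · simpa using ha
  · simp [update_of_ne hjk]

def nimSum (u : Fin 3 → ℕ) : ℕ := u 0 ^^^ u 1 ^^^ u 2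

theorem ReducesAtMostOne.eq_of_nimSum_eq_zero {u v : Fin 3 → ℕ} (h : ReducesAtMostOne u v)
    (hu : nimSum u = 0) (hv : nimSum v = 0) : v = u := by
  by_contra hne
  obtain ⟨k, hk⟩ := Function.ne_iff.mp hne
  have hrest : ∀ k', k' ≠ k → v k' = u k' := fun k' hk' => by
    by_contra h'
    exact hk' (h.2 k' k h' hk)
  have huv : nimSum v = nimSum u := hv.trans hu.symm
  unfold nimSum at huv
  fin_cases k
  · rw [hrest 1 (by decide), hrest 2 (by decide)] at huv
    exact hk (by simpa [Nat.xor_left_inj] using huv)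
  · rw [hrest 0 (by decide), hrest 2 (by decide)] at huv
    exact hk (by simpa [Nat.xor_left_inj, Nat.xor_right_inj] using huv)
  · rw [hrest 0 (by decide), hrest 1 (by decide)] at huv
    exact hk (by simpa [Nat.xor_right_inj] using huv)

theorem exists_reducesAtMostOne_nimSum_eq_zero (u : Fin 3 → ℕ) :
    ∃ v, ReducesAtMostOne u v ∧ nimSum v = 0 := by
  by_cases hu : nimSum u = 0
  · exact ⟨u, reducesAtMostOne_refl u, hu⟩
  rcases Nat.xor_trichotomy hu with h | h | h
  · refine ⟨update u 0 (u 1 ^^^ u 2), reducesAtMostOne_update u h.le, ?_⟩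
    simp [nimSum, update]
  · refine ⟨update u 1 (u 2 ^^^ u 0), reducesAtMostOne_update u h.le, ?_⟩
    simp [nimSum, update, Nat.xor_comm (u 0)]
  · refine ⟨update u 2 (u 0 ^^^ u 1), reducesAtMostOne_update u h.le, ?_⟩
    simp [nimSum, update]

theorem exists_forall_eq_of_subsingleton {ι : Type*} [Nonempty ι] {P : ι → Prop}
    (h : ∀ k k', P k → P k' → k = k') : ∃ a, ∀ k, P k → k = a := by
  by_cases hP : ∃ a, P a
  · obtain ⟨a, ha⟩ := hP
    exact ⟨a, fun k hk => h k a hk ha⟩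
  · exact ⟨Classical.arbitrary ι, fun k hk => absurd ⟨k, hk⟩ hP⟩

abbrev pileIndex : Fin 3 × Fin 2 ≃ Fin 6 := finProdFinEquiv

theorem val_pileIndex (k : Fin 3) (p : Fin 2) : (pileIndex (k, p) : ℕ) = p + 2 * k :=
  finProdFinEquiv_apply_val (k, p)

def pileClass (x : Fin 6 → ℕ) (p : Fin 2) : Fin 3 → ℕ := fun k => x (pileIndex (k, p))

theorem exists_window_iff_atMostOnePerClass (C : Fin 6 → Prop) :
    (∃ s ∈ ({1, 3} : Set ℕ), ∃ i : ℕ, ∀ j, C j → ∃ t < 2, (j : ℕ) = (i + t * s) % 6) ↔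
      ∀ (p : Fin 2) (k k' : Fin 3), C (pileIndex (k, p)) → C (pileIndex (k', p)) → k = k' := by
  constructor
  · rintro ⟨s, hs, i, hi⟩ p k k' hk hk'
    obtain ⟨t, ht, hjt⟩ := hi _ hk
    obtain ⟨t', ht', hjt'⟩ := hi _ hk'
    rw [val_pileIndex] at hjt hjt'
    have := p.isLt
    obtain rfl | rfl : s = 1 ∨ s = 3 := hs
    all_goals (apply Fin.ext; omega)
  · intro huniq
    obtain ⟨a, ha⟩ := exists_forall_eq_of_subsingleton (huniq 0)
    obtain ⟨b, hb⟩ := exists_forall_eq_of_subsingleton (huniq 1)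
    have hC : ∀ j, C j → (j : ℕ) = 2 * a ∨ (j : ℕ) = 2 * b + 1 := by
      intro j hj
      obtain ⟨⟨k, p⟩, rfl⟩ := pileIndex.surjective j
      rw [val_pileIndex]
      fin_cases p
      · exact Or.inl (by rw [ha k hj]; exact Nat.zero_add _)
      · exact Or.inr (by rw [hb k hj]; exact Nat.add_comm _ _)
    have := a.isLt
    have := b.isLt
    -- the cyclic distance from `2a` to `2b + 1` is odd; for 5 = -1 the window starts at `2b + 1`
    obtain hd | hd | hd : (2 * (b : ℕ) + 7 - 2 * a) % 6 = 1 ∨ (2 * (b : ℕ) + 7 - 2 * a) % 6 = 3 ∨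
        (2 * (b : ℕ) + 7 - 2 * a) % 6 = 5 := by omega
    · refine ⟨1, by simp, 2 * a, fun j hj => ?_⟩
      rcases hC j hj with hj | hj
      exacts [⟨0, by omega, by omega⟩, ⟨1, by omega, by omega⟩]
    · refine ⟨3, by simp, 2 * a, fun j hj => ?_⟩
      rcases hC j hj with hj | hj
      exacts [⟨0, by omega, by omega⟩, ⟨1, by omega, by omega⟩]
    · refine ⟨1, by simp, 2 * b + 1, fun j hj => ?_⟩
      rcases hC j hj with hj | hj
      exacts [⟨1, by omega, by omega⟩, ⟨0, by omega, by omega⟩]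

theorem ecnMove_iff {x y : Fin 6 → ℕ} :
    ecnMove 6 {1, 3} 2 x y ↔
      y ≠ x ∧ ∀ p, ReducesAtMostOne (pileClass x p) (pileClass y p) := by
  unfold ecnMove ReducesAtMostOne pileClass
  rw [exists_window_iff_atMostOnePerClass fun j => y j ≠ x j]
  constructor
  · rintro ⟨hne, hle, huniq⟩
    exact ⟨hne, fun p => ⟨fun k => hle _, huniq p⟩⟩
  · rintro ⟨hne, h⟩
    refine ⟨hne, fun j => ?_, fun p => (h p).2⟩
    obtain ⟨⟨k, p⟩, rfl⟩ := pileIndex.surjective j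
    exact (h p).1 k

theorem eq_of_pileClass_eq {x y : Fin 6 → ℕ} (h : ∀ p, pileClass y p = pileClass x p) :
    y = x := by
  funext j
  obtain ⟨⟨k, p⟩, rfl⟩ := pileIndex.surjective j
  exact congrFun (h p) k

theorem exists_pileClass_eq (v : Fin 2 → Fin 3 → ℕ) : ∃ y, ∀ p, pileClass y p = v p :=
  ⟨fun j => v (pileIndex.symm j).2 (pileIndex.symm j).1, fun p => by
    funext k
    simp [pileClass]⟩

theorem isP_iff_forall_nimSum_pileClass_eq_zero (x : Fin 6 → ℕ) :
    IsP (ecnMove 6 {1, 3} 2) x ↔ ∀ p, nimSum (pileClass x p) = 0 := by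
  refine isP_iff_of_wellFounded (Q := fun x => ∀ p, nimSum (pileClass x p) = 0)
    (wellFounded_flip_ecnMove _ _ _) ?_ ?_ x
  · intro x y hx hxy hy
    obtain ⟨hne, hred⟩ := ecnMove_iff.mp hxy
    exact hne (eq_of_pileClass_eq fun p => (hred p).eq_of_nimSum_eq_zero (hx p) (hy p))
  · intro x hx
    choose v hv using fun p => exists_reducesAtMostOne_nimSum_eq_zero (pileClass x p)
    obtain ⟨y, hy⟩ := exists_pileClass_eq v
    refine ⟨y, ecnMove_iff.mpr ⟨?_, fun p => hy p ▸ (hv p).1⟩, fun p => hy p ▸ (hv p).2⟩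
    rintro rfl
    exact hx fun p => hy p ▸ (hv p).2

end CircularNim

theorem ecn6_13_2_P_iff (n : Fin 6 → ℕ) :
    IsP (ecnMove 6 {1, 3} 2) n ↔
      n 0 ^^^ n 2 ^^^ n 4 = 0 ∧ n 1 ^^^ n 3 ^^^ n 5 = 0 := by
  rw [CircularNim.isP_iff_forall_nimSum_pileClass_eq_zero, Fin.forall_fin_two]
  rfl
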